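/- In the on-chain-verified audit game, if S_a > ((1 − p_a)/p_a)·R_a, then the fully dishonest profile (every SP plays σ^d) is not a pure Nash equilibrium: some SP has a unilateral deviation (replacing a constantly-✓ reporting policy on one pair by a constantly-✗ policy) that strictly increases its utility. -/
import Mathlib


/-!
On-chain-verified audit game: `N ≥ 3` storage providers (SPs), parameters
`R_s > 0` (storage reward), `R_a > 0` (per-audit reward), `c_s > 0` (storage cost),
`c_a > 0` (audit cost), `S_a ≥ 0` (slashing penalty), `p_a ∈ (0,1]` (inspection
probability), `ε ∈ (0,1)` (noise). A pure strategy of SP `i` is a triple `(s, a, ρ)`: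
a storage bit, audit bits for each other SP, and reporting policies `ρ j : Bool → Bool`
(report as a function of having received a valid proof).
-/

open Finset

/-- A pure strategy of storage provider `i` in the on-chain-verified audit game. -/
structure Strat (N : ℕ) (i : Fin N) where
  /-- whether `i` stores its assigned data -/
  s : Bool
  /-- whether `i` audits SP `j` (at cost `c_a`) -/
  a : {j : Fin N // j ≠ i} → Bool
  /-- `i`'s reporting policy about `j`, as a function of whether a valid proof was received -/
  ρ : {j : Fin N // j ≠ i} → Bool → Bool

/-- Numerical value of a Boolean choice. -/
def b01 (b : Bool) : ℝ := if b then 1 else 0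

/-- Expected audit payoff of the auditor from one ordered pair `(i,j)`, where `sj` is the
auditee's storage bit, `a` the auditor's audit bit, and `ρ` the auditor's reporting policy.
The backing probability is `β = 1 − ε` if the auditee stores and `0` otherwise; an unbacked
✓ report earns `(1 − p_a)·R_a − p_a·S_a` in expectation. -/
noncomputable def pairPayoff (Ra ca Sa pa ε : ℝ) (sj a : Bool) (ρ : Bool → Bool) : ℝ :=
  let β : ℝ := if sj then 1 - ε else 0
  let F : ℝ := (1 - pa) * Ra - pa * Sa
  if a then β * b01 (ρ true) * Ra + (1 - β) * b01 (ρ false) * F - ca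
  else b01 (ρ false) * (β * Ra + (1 - β) * F)

/-- The deterministic report of `i` about `j`: `r_i^j = ρ_i^j (a_i^j · s_j)`. -/
def report {N : ℕ} (σ : ∀ i : Fin N, Strat N i) (i : Fin N) (j : {j : Fin N // j ≠ i}) : Bool :=
  (σ i).ρ j ((σ i).a j && (σ j.1).s)

/-- Number of SPs `j ≠ i` whose deterministic report about `i` is ✓. -/
def trueReports {N : ℕ} (σ : ∀ i : Fin N, Strat N i) (i : Fin N) : ℕ :=
  (univ.filter fun j : {j : Fin N // j ≠ i} => report σ j.1 ⟨i, Ne.symm j.2⟩ = true).card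

/-- Total (expected) utility of SP `i`:
`u_i(σ) = R_s·1[|{j ≠ i : r_j^i = 1}| > N/2] − c_s·s_i + Σ_{j≠i} pairPayoff(i,j)`. -/
noncomputable def U {N : ℕ} (Rs Ra cs ca Sa pa ε : ℝ) (σ : ∀ i : Fin N, Strat N i)
    (i : Fin N) : ℝ :=
  Rs * (if (N : ℝ) / 2 < (trueReports σ i : ℝ) then 1 else 0)
    - cs * b01 (σ i).s
    + ∑ j : {j : Fin N // j ≠ i}, pairPayoff Ra ca Sa pa ε (σ j.1).s ((σ i).a j) ((σ i).ρ j)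

/-- Pure Nash equilibrium: no SP can strictly increase its own utility by unilaterally
changing its strategy. -/
def IsNashEq {N : ℕ} (Rs Ra cs ca Sa pa ε : ℝ) (σ : ∀ i : Fin N, Strat N i) : Prop :=
  ∀ (i : Fin N) (τ : Strat N i),
    U Rs Ra cs ca Sa pa ε (Function.update σ i τ) i ≤ U Rs Ra cs ca Sa pa ε σ i

/-- The honest strategy profile: store, audit everyone, report ✓ iff a valid proof
was received. -/
def honest (N : ℕ) : ∀ i : Fin N, Strat N i :=
  fun _ => ⟨true, fun _ => true, fun _ b => b⟩

/-- The fully dishonest strategy profile: don't store, don't audit, always report ✓. -/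
def dishonest (N : ℕ) : ∀ i : Fin N, Strat N i :=
  fun _ => ⟨false, fun _ => false, fun _ _ => true⟩

/-- In the on-chain-verified audit game, if `S_a > ((1 − p_a)/p_a)·R_a`,
then the fully dishonest profile is not a pure Nash equilibrium: some SP has a unilateral
deviation that strictly increases its utility. -/
theorem onchain_full_dishonesty_not_nash
    (N : ℕ) (hN : 3 ≤ N) (Rs Ra cs ca Sa pa ε : ℝ)
    (hRs : 0 < Rs) (hRa : 0 < Ra) (hcs : 0 < cs) (hca : 0 < ca) (hSa : 0 ≤ Sa)
    (hpa0 : 0 < pa) (hpa1 : pa ≤ 1) (hε0 : 0 < ε) (hε1 : ε < 1)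
    (hS : ((1 - pa) / pa) * Ra < Sa) :
    ¬ IsNashEq Rs Ra cs ca Sa pa ε (dishonest N) := by
  intro hNE
  have hF : (1 - pa) * Ra - pa * Sa < 0 := by
    have h := hS
    rw [div_mul_eq_mul_div, div_lt_iff₀ hpa0] at h
    nlinarith
  have hi0 : (0 : ℕ) < N := by omega
  set i : Fin N := ⟨0, hi0⟩ with hidef
  set τ : Strat N i := ⟨false, fun _ => false, fun _ _ => false⟩ with hτ
  have key := hNE i τ
  have hcount : trueReports (Function.update (dishonest N) i τ) i
      = trueReports (dishonest N) i := by
    unfold trueReports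
    congr 1
    apply Finset.filter_congr
    intro j _
    simp [report, dishonest, Function.update_of_ne j.2]
  have hsum1 : ∀ j : {j : Fin N // j ≠ i},
      pairPayoff Ra ca Sa pa ε ((dishonest N) j.1).s (((dishonest N) i).a j)
        (((dishonest N) i).ρ j) = (1 - pa) * Ra - pa * Sa := by
    intro j
    simp [dishonest, pairPayoff, b01]
  have hsum2 : ∀ j : {j : Fin N // j ≠ i},
      pairPayoff Ra ca Sa pa ε ((Function.update (dishonest N) i τ) j.1).s
        (((Function.update (dishonest N) i τ) i).a j)
        (((Function.update (dishonest N) i τ) i).ρ j) = 0 := by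
    intro j
    simp [Function.update_self, Function.update_of_ne j.2, dishonest, hτ, pairPayoff, b01]
  unfold U at key
  rw [hcount, Finset.sum_congr rfl (fun j _ => hsum1 j),
    Finset.sum_congr rfl (fun j _ => hsum2 j)] at key
  simp [Function.update_self, dishonest, hτ, b01] at key
  have hN1 : (0 : ℝ) < ((N - 1 : ℕ) : ℝ) := by
    have : 0 < N - 1 := by omega
    exact_mod_cast this
  nlinarith
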